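/- arXiv:2110.03747 — 6 statements merged into one kernel-verified Lean document; each statement's English description precedes it below -/
import Mathlib

section
/- Let A be an n×n real matrix, B an n×m real matrix, C an m×n real matrix, P an n×n symmetric positive definite real matrix, and let a, b be real numbers with a < 0 < b. Then the block matrix [[P·A + Aᵀ·P + Cᵀ·C , P·B − ((a+b)/2)·Cᵀ] ; [Bᵀ·P − ((a+b)/2)·C , a·b·I_m]] is negative semidefinite if and only if the matrix P·(A + ((a+b)/(2ab))·B·C) + (Aᵀ + ((a+b)/(2ab))·Cᵀ·Bᵀ)·P + (1 − (a+b)²/(4ab))·Cᵀ·C − (1/(ab))·P·B·Bᵀ·P is negative semidefinite. -/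
/-!
With `X = P A + Aᵀ P + Cᵀ C` and `Y = P B - ((a + b) / 2) Cᵀ`, the form-(1) matrix is
`[[X, Y], [Yᵀ, a b I]]`, and the form-(3) matrix is its Schur complement `X - (a b)⁻¹ Y Yᵀ` written
out, by symmetry of `P`. Since `a b < 0`, the lower right block of the negated block matrix is
positive definite, so the negated block matrix is positive semidefinite exactly when the negated
Schur complement is.
-/

open Matrix

namespace Matrix

variable {m n 𝕜 : Type*} [Fintype m] [Fintype n] [DecidableEq n]
  [Field 𝕜] [PartialOrder 𝕜] [StarRing 𝕜] [StarOrderedRing 𝕜]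

theorem posSemidef_fromBlocks_smul_one_iff {c : 𝕜} (hc : 0 < c) (X : Matrix m m 𝕜)
    (Y : Matrix m n 𝕜) :
    (fromBlocks X Y Yᴴ (c • 1)).PosSemidef ↔ (X - c⁻¹ • (Y * Yᴴ)).PosSemidef := by
  have hD : (c • 1 : Matrix n n 𝕜).PosDef := by
    rw [smul_one_eq_diagonal]
    exact .diagonal fun _ ↦ hc
  have hinv : (c • 1 : Matrix n n 𝕜) * (c⁻¹ • 1) = 1 := by
    rw [smul_mul_smul_comm, one_mul, mul_inv_cancel₀ hc.ne', one_smul]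
  let := invertibleOfRightInverse _ _ hinv
  rw [hD.fromBlocks₂₂, inv_eq_right_inv hinv, Matrix.mul_smul, Matrix.mul_one, Matrix.smul_mul]

theorem negSemidef_fromBlocks_smul_one_iff {d : 𝕜} (hd : d < 0) (X : Matrix m m 𝕜)
    (Y : Matrix m n 𝕜) :
    (-fromBlocks X Y Yᴴ (d • 1)).PosSemidef ↔ (-(X - d⁻¹ • (Y * Yᴴ))).PosSemidef := by
  rw [fromBlocks_neg, ← conjTranspose_neg, ← neg_smul,
    posSemidef_fromBlocks_smul_one_iff (neg_pos.mpr hd)]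
  congr! 1
  simp only [conjTranspose_neg, Matrix.neg_mul, Matrix.mul_neg, neg_neg, inv_neg, neg_smul]
  abel

end Matrix

theorem conicSectorForm3_eq_schurComplement {ι κ K : Type*} [Fintype ι] [Fintype κ] [Field K]
    (A : Matrix ι ι K) (B : Matrix ι κ K) (C : Matrix κ ι K) {P : Matrix ι ι K} (hP : Pᵀ = P)
    (a b : K) :
    P * (A + ((a + b) / (2 * a * b)) • (B * C))
        + (Aᵀ + ((a + b) / (2 * a * b)) • (Cᵀ * Bᵀ)) * P
        + (1 - (a + b) ^ 2 / (4 * (a * b))) • (Cᵀ * C)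
        - (1 / (a * b)) • (P * B * Bᵀ * P)
      = P * A + Aᵀ * P + Cᵀ * C
        - (a * b)⁻¹ • ((P * B - ((a + b) / 2) • Cᵀ) * (P * B - ((a + b) / 2) • Cᵀ)ᵀ) := by
  -- `ring` does not evaluate `4⁻¹` in a field of unknown characteristic.
  have h4 : (4 : K)⁻¹ = 2⁻¹ * 2⁻¹ := by rw [← mul_inv]; norm_num
  simp only [transpose_sub, transpose_smul, transpose_mul, transpose_transpose, hP,
    Matrix.mul_sub, Matrix.sub_mul, Matrix.mul_add, Matrix.add_mul, Matrix.mul_smul,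
    Matrix.smul_mul, smul_sub, smul_smul, Matrix.mul_assoc]
  match_scalars <;> simp only [div_eq_mul_inv, mul_inv, h4] <;> ring

/-- Equivalence of forms (1) and (3) of the Conic Sector Lemma LMI. -/
theorem conic_sector_lemma_form1_iff_form3
    {n m : ℕ} (A : Matrix (Fin n) (Fin n) ℝ) (B : Matrix (Fin n) (Fin m) ℝ)
    (C : Matrix (Fin m) (Fin n) ℝ) (P : Matrix (Fin n) (Fin n) ℝ)
    (hP : P.PosDef) (a b : ℝ) (ha : a < 0) (hb : 0 < b) :
    (-(Matrix.fromBlocks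
        (P * A + Aᵀ * P + Cᵀ * C) (P * B - ((a + b) / 2) • Cᵀ)
        (Bᵀ * P - ((a + b) / 2) • C) ((a * b) • (1 : Matrix (Fin m) (Fin m) ℝ)))).PosSemidef ↔
    (-(P * (A + ((a + b) / (2 * a * b)) • (B * C))
        + (Aᵀ + ((a + b) / (2 * a * b)) • (Cᵀ * Bᵀ)) * P
        + (1 - (a + b) ^ 2 / (4 * (a * b))) • (Cᵀ * C)
        - (1 / (a * b)) • (P * B * Bᵀ * P))).PosSemidef := by
  have hPt : Pᵀ = P := hP.isHermitian.eq
  have hoff : Bᵀ * P - ((a + b) / 2) • C = (P * B - ((a + b) / 2) • Cᵀ)ᴴ := by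
    simp [conjTranspose_eq_transpose_of_trivial, transpose_sub, transpose_mul, hPt]
  rw [hoff, conicSectorForm3_eq_schurComplement A B C hPt, ← conjTranspose_eq_transpose_of_trivial]
  exact negSemidef_fromBlocks_smul_one_iff (mul_neg_of_neg_of_pos ha hb) _ _
end

section
/- Let A be an n×n real matrix, B an n×m real matrix, C an m×n real matrix, P an n×n symmetric positive definite real matrix, and let a, b be real numbers with a < 0 < b. Then the block matrix [[P·A + Aᵀ·P + Cᵀ·C , P·B − ((a+b)/2)·Cᵀ] ; [Bᵀ·P − ((a+b)/2)·C , a·b·I_m]] is negative semidefinite if and only if, with P' := (1/b)·P, the 3×3 block matrix [[P'·A + Aᵀ·P' , P'·B , Cᵀ] ; [Bᵀ·P' , −((a−b)²/(4b))·I_m , −((a+b)/2)·I_m] ; [C , −((a+b)/2)·I_m , −b·I_m]] is negative semidefinite. -/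
/-!
Regroup the blocks of form (2) so that its last diagonal block `-b • 1` becomes a corner, and take
the Schur complement of `b • 1` in the negated matrix. With `c = (a + b) / 2` this subtracts
`b⁻¹ • [-Cᵀ; c • 1] [-C, c • 1]`, which absorbs the `Cᵀ * C` and `c • Cᵀ` terms of form (1), and
since `(a - b) ^ 2 / (4 * b) - c ^ 2 / b = -a` the complement is exactly `b⁻¹` times the negated
form (1).
-/

open Matrix

namespace Matrix

variable {l m n : Type*}

theorem fromBlocks_fromCols_fromRows_submatrix_sumAssoc {α : Type*} (A : Matrix l l α)
    (B₁ : Matrix l m α) (B₂ : Matrix l n α) (C₁ : Matrix m l α) (C₂ : Matrix n l α)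
    (D₁₁ : Matrix m m α) (D₁₂ : Matrix m n α) (D₂₁ : Matrix n m α) (D₂₂ : Matrix n n α) :
    (fromBlocks A (fromCols B₁ B₂) (fromRows C₁ C₂) (fromBlocks D₁₁ D₁₂ D₂₁ D₂₂)).submatrix
        (Equiv.sumAssoc l m n) (Equiv.sumAssoc l m n) =
      fromBlocks (fromBlocks A B₁ C₁ D₁₁) (fromRows B₂ D₁₂) (fromCols C₂ D₂₁) D₂₂ := by
  ext ((i | i) | i) ((j | j) | j) <;> rfl

theorem posSemidef_smul_iff {M : Matrix n n ℝ} {c : ℝ} (hc : 0 < c) :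
    (c • M).PosSemidef ↔ M.PosSemidef :=
  ⟨fun h => by simpa [smul_smul, hc.ne'] using h.smul (inv_nonneg.2 hc.le), fun h => h.smul hc.le⟩

theorem posSemidef_fromBlocks_smul_one_iff_s1 [Fintype m] [Fintype n] [DecidableEq n]
    (A : Matrix m m ℝ) (B : Matrix m n ℝ) {b : ℝ} (hb : 0 < b) :
    (fromBlocks A B Bᵀ (b • 1)).PosSemidef ↔ (A - b⁻¹ • (B * Bᵀ)).PosSemidef := by
  have hinv : (b • 1 : Matrix n n ℝ) * (b⁻¹ • 1) = 1 := by simp [smul_smul, hb.ne']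
  let := invertibleOfRightInverse _ _ hinv
  rw [← conjTranspose_eq_transpose_of_trivial, PosDef.fromBlocks₂₂ A B (PosDef.one.smul hb),
    inv_eq_right_inv hinv]
  simp only [Matrix.mul_smul, Matrix.mul_one, conjTranspose_eq_transpose_of_trivial, smul_mul]

end Matrix

theorem conic_sector_lemma_form1_iff_form2_general
    {n m : ℕ} (A : Matrix (Fin n) (Fin n) ℝ) (B : Matrix (Fin n) (Fin m) ℝ)
    (C : Matrix (Fin m) (Fin n) ℝ) (P : Matrix (Fin n) (Fin n) ℝ)
    (a b : ℝ) (hb : 0 < b) :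
    (-(Matrix.fromBlocks
        (P * A + Aᵀ * P + Cᵀ * C) (P * B - ((a + b) / 2) • Cᵀ)
        (Bᵀ * P - ((a + b) / 2) • C) ((a * b) • (1 : Matrix (Fin m) (Fin m) ℝ)))).PosSemidef ↔
    (-(Matrix.fromBlocks
        (((1 / b) • P) * A + Aᵀ * ((1 / b) • P))
        (Matrix.fromCols (((1 / b) • P) * B) Cᵀ)
        (Matrix.fromRows (Bᵀ * ((1 / b) • P)) C)
        (Matrix.fromBlocks
          ((-((a - b) ^ 2 / (4 * b))) • (1 : Matrix (Fin m) (Fin m) ℝ))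
          ((-((a + b) / 2)) • (1 : Matrix (Fin m) (Fin m) ℝ))
          ((-((a + b) / 2)) • (1 : Matrix (Fin m) (Fin m) ℝ))
          ((-b) • (1 : Matrix (Fin m) (Fin m) ℝ))))).PosSemidef := by
  rw [← posSemidef_smul_iff (inv_pos.2 hb)]
  conv_rhs => rw [← posSemidef_submatrix_equiv (Equiv.sumAssoc (Fin n) (Fin m) (Fin m)),
    submatrix_neg, Pi.neg_apply, Pi.neg_apply, fromBlocks_fromCols_fromRows_submatrix_sumAssoc,
    fromBlocks_neg, neg_smul b, neg_neg]
  set R := fromRows (-Cᵀ) (((a + b) / 2) • (1 : Matrix (Fin m) (Fin m) ℝ))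
  have hR : -fromRows Cᵀ ((-((a + b) / 2)) • (1 : Matrix (Fin m) (Fin m) ℝ)) = R := by
    rw [fromRows_neg, neg_smul, neg_neg]
  have hRt : -fromCols C ((-((a + b) / 2)) • (1 : Matrix (Fin m) (Fin m) ℝ)) = Rᵀ := by
    rw [transpose_fromRows, fromCols_neg, neg_smul, neg_neg, transpose_neg, transpose_transpose,
      transpose_smul, transpose_one]
  rw [hR, hRt, posSemidef_fromBlocks_smul_one_iff_s1 _ _ hb]
  congr! 1
  simp only [R, transpose_fromRows, fromRows_mul_fromCols, fromBlocks_smul, sub_eq_add_neg,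
    fromBlocks_neg, fromBlocks_add, fromBlocks_inj]
  simp only [transpose_neg, transpose_transpose, transpose_smul, transpose_one, Matrix.smul_mul,
    Matrix.mul_smul, Matrix.neg_mul, Matrix.mul_neg, neg_neg, Matrix.one_mul, Matrix.mul_one,
    one_div, smul_add, smul_neg, neg_add, smul_smul, true_and]
  match_scalars
  field_simp
  ring

/-- Equivalence of forms (1) and (2) of the Conic Sector Lemma LMI. -/
theorem conic_sector_lemma_form1_iff_form2
    {n m : ℕ} (A : Matrix (Fin n) (Fin n) ℝ) (B : Matrix (Fin n) (Fin m) ℝ)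
    (C : Matrix (Fin m) (Fin n) ℝ) (P : Matrix (Fin n) (Fin n) ℝ)
    (hP : P.PosDef) (a b : ℝ) (ha : a < 0) (hb : 0 < b) :
    (-(Matrix.fromBlocks
        (P * A + Aᵀ * P + Cᵀ * C) (P * B - ((a + b) / 2) • Cᵀ)
        (Bᵀ * P - ((a + b) / 2) • C) ((a * b) • (1 : Matrix (Fin m) (Fin m) ℝ)))).PosSemidef ↔
    (-(Matrix.fromBlocks
        (((1 / b) • P) * A + Aᵀ * ((1 / b) • P))
        (Matrix.fromCols (((1 / b) • P) * B) Cᵀ)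
        (Matrix.fromRows (Bᵀ * ((1 / b) • P)) C)
        (Matrix.fromBlocks
          ((-((a - b) ^ 2 / (4 * b))) • (1 : Matrix (Fin m) (Fin m) ℝ))
          ((-((a + b) / 2)) • (1 : Matrix (Fin m) (Fin m) ℝ))
          ((-((a + b) / 2)) • (1 : Matrix (Fin m) (Fin m) ℝ))
          ((-b) • (1 : Matrix (Fin m) (Fin m) ℝ))))).PosSemidef :=
  conic_sector_lemma_form1_iff_form2_general A B C P a b hb
end

section
/- Let Ã, Q₀, δQ be n×n real matrices with Q₀ and δQ symmetric; let E be an n×m real matrix, K₀ and δK m×r real matrices, R an r×n real matrix, C̃ a q×n real matrix, F a q×m real matrix, and W₁ an m×m symmetric positive definite real matrix. Define Π₁ := He[Ãᵀ·δQ + Ãᵀ·Q₀ + Q₀·E·K₀·R + δQ·E·K₀·R + Q₀·E·δK·R + C̃ᵀ·F·K₀·R + C̃ᵀ·F·δK·R + Rᵀ·K₀ᵀ·Fᵀ·F·δK·R] + C̃ᵀ·C̃ + Rᵀ·K₀ᵀ·Fᵀ·F·K₀·R. If the 3×3 block matrix [[Π₁ , δQ·E , Rᵀ·δKᵀ] ;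 [Eᵀ·δQ , −W₁⁻¹ , 0] ; [δK·R , 0 , −(W₁⁻¹ + Fᵀ·F)⁻¹]] is negative semidefinite, then, with Q := Q₀ + δQ and K := K₀ + δK, the matrix He[Q·(Ã + E·K·R)] + (C̃ + F·K·R)ᵀ·(C̃ + F·K·R) is negative semidefinite. -/
/-!
With `A := Eᵀ δQ`, `B := δK R` and `V := W₁⁻¹ + Fᵀ F`, the closed-loop matrix equals
`Π₁ + AᵀB + BᵀA + Bᵀ Fᵀ F B`. Congruence of the LMI by `[I; W₁ A; V B]` eliminates the two
inverse blocks and gives `Π₁ + Aᵀ W₁ A + Bᵀ V B ⪯ 0`, and the matrix Young inequality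
`AᵀB + BᵀA ⪯ Aᵀ W₁ A + Bᵀ W₁⁻¹ B` bounds the closed-loop matrix by that.
-/

open Matrix

namespace Matrix

variable {l m n : Type*} [Fintype l] [Fintype m] [Fintype n]
  [DecidableEq l] [DecidableEq m] [DecidableEq n]

section CommRing

variable {R : Type*} [CommRing R] [PartialOrder R] [StarRing R]

theorem posSemidef_neg_add_conjTranspose_mul_mul_of_posSemidef_neg_fromBlocks
    {P : Matrix n n R} {C : Matrix m n R} {D : Matrix m m R} (hD : IsUnit D)
    (h : (-fromBlocks P Cᴴ C (-D⁻¹)).PosSemidef) :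
    (-(P + Cᴴ * D * C)).PosSemidef := by
  convert h.conjTranspose_mul_mul_same (fromRows 1 (D * C)) using 1
  simp only [conjTranspose_fromRows_eq_fromCols_conjTranspose, conjTranspose_one,
    Matrix.mul_neg, Matrix.neg_mul, fromBlocks_mul_fromRows, fromCols_mul_fromRows,
    Matrix.one_mul, Matrix.mul_one, Matrix.mul_assoc,
    nonsing_inv_mul_cancel_left _ _ ((isUnit_iff_isUnit_det D).mp hD),
    add_neg_cancel, Matrix.mul_zero, add_zero]

theorem posSemidef_neg_add_of_posSemidef_neg_fromBlocks_fromBlocks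
    {P : Matrix n n R} {A : Matrix l n R} {B : Matrix m n R} {U : Matrix l l R}
    {V : Matrix m m R} (hU : IsUnit U) (hV : IsUnit V)
    (h : (-fromBlocks P (fromCols Aᴴ Bᴴ) (fromRows A B)
      (fromBlocks (-U⁻¹) 0 0 (-V⁻¹))).PosSemidef) :
    (-(P + Aᴴ * U * A + Bᴴ * V * B)).PosSemidef := by
  have hinv : fromBlocks (-U⁻¹) 0 0 (-V⁻¹) = -(fromBlocks U 0 0 V)⁻¹ := by
    rw [inv_fromBlocks_zero₂₁_of_isUnit_iff _ _ _ (iff_of_true hU hV)]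
    simp [fromBlocks_neg]
  rw [hinv, ← conjTranspose_fromRows_eq_fromCols_conjTranspose] at h
  convert posSemidef_neg_add_conjTranspose_mul_mul_of_posSemidef_neg_fromBlocks
    (isUnit_fromBlocks_zero₂₁.mpr ⟨hU, hV⟩) h using 2
  simp [conjTranspose_fromRows_eq_fromCols_conjTranspose, fromCols_mul_fromBlocks,
    fromCols_mul_fromRows, add_assoc]

end CommRing

omit [DecidableEq n] in
theorem PosDef.posSemidef_young {K : Type*} [Field K] [PartialOrder K] [StarRing K]
    {W : Matrix m m K} (hW : W.PosDef) (A B : Matrix m n K) :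
    (Aᴴ * W * A + Bᴴ * W⁻¹ * B - (Aᴴ * B + Bᴴ * A)).PosSemidef := by
  have hW' : IsUnit W.det := (isUnit_iff_isUnit_det W).mp hW.isUnit
  convert hW.inv.posSemidef.conjTranspose_mul_mul_same (W * A - B) using 1
  simp only [conjTranspose_sub, conjTranspose_mul, hW.isHermitian.eq, Matrix.sub_mul,
    Matrix.mul_sub, Matrix.mul_assoc, nonsing_inv_mul_cancel_left _ _ hW',
    mul_nonsing_inv_cancel_left _ _ hW']
  abel

end Matrix

/-- ICO step: the LMI (11) implies the closed-loop Lyapunov inequality (5) (relaxed to ⪯ 0)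
at the updated variables Q = Q₀ + δQ, K = K₀ + δK. -/
theorem ico_lyapunov_constraint
    {n m r q : ℕ}
    (At Q₀ δQ : Matrix (Fin n) (Fin n) ℝ) (hQ₀ : Q₀.IsSymm) (hδQ : δQ.IsSymm)
    (E : Matrix (Fin n) (Fin m) ℝ) (K₀ δK : Matrix (Fin m) (Fin r) ℝ)
    (R : Matrix (Fin r) (Fin n) ℝ) (Ct : Matrix (Fin q) (Fin n) ℝ)
    (F : Matrix (Fin q) (Fin m) ℝ)
    (W₁ : Matrix (Fin m) (Fin m) ℝ) (hW₁ : W₁.PosDef)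
    (Pi₁ : Matrix (Fin n) (Fin n) ℝ)
    (hPi₁ : Pi₁ = (Atᵀ * δQ + Atᵀ * Q₀ + Q₀ * E * K₀ * R + δQ * E * K₀ * R
        + Q₀ * E * δK * R + Ctᵀ * F * K₀ * R + Ctᵀ * F * δK * R
        + Rᵀ * K₀ᵀ * Fᵀ * F * δK * R)
      + (Atᵀ * δQ + Atᵀ * Q₀ + Q₀ * E * K₀ * R + δQ * E * K₀ * R
        + Q₀ * E * δK * R + Ctᵀ * F * K₀ * R + Ctᵀ * F * δK * R
        + Rᵀ * K₀ᵀ * Fᵀ * F * δK * R)ᵀ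
      + Ctᵀ * Ct + Rᵀ * K₀ᵀ * Fᵀ * F * K₀ * R)
    (hLMI : (-(Matrix.fromBlocks
        Pi₁ (Matrix.fromCols (δQ * E) (Rᵀ * δKᵀ))
        (Matrix.fromRows (Eᵀ * δQ) (δK * R))
        (Matrix.fromBlocks (-(W₁⁻¹)) 0 0 (-((W₁⁻¹ + Fᵀ * F)⁻¹))))).PosSemidef) :
    (-((Q₀ + δQ) * (At + E * (K₀ + δK) * R) + ((Q₀ + δQ) * (At + E * (K₀ + δK) * R))ᵀ
      + (Ct + F * (K₀ + δK) * R)ᵀ * (Ct + F * (K₀ + δK) * R))).PosSemidef := by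
  set A := Eᵀ * δQ
  set B := δK * R
  set V := W₁⁻¹ + Fᵀ * F
  have hV : V.PosDef := hW₁.inv.add_posSemidef (posSemidef_conjTranspose_mul_self F)
  have hLMI' : (-fromBlocks Pi₁ (fromCols Aᴴ Bᴴ) (fromRows A B)
      (fromBlocks (-W₁⁻¹) 0 0 (-V⁻¹))).PosSemidef := by
    convert hLMI using 5 <;>
      simp [A, B, conjTranspose_eq_transpose_of_trivial, transpose_mul, hδQ.eq]
  have hSchur := posSemidef_neg_add_of_posSemidef_neg_fromBlocks_fromBlocks
    hW₁.isUnit hV.isUnit hLMI'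
  have hYoung := hW₁.posSemidef_young A B
  refine Eq.subst (motive := Matrix.PosSemidef) ?_ (hSchur.add hYoung)
  simp only [A, B, V, hPi₁, conjTranspose_eq_transpose_of_trivial, transpose_mul, transpose_add,
    transpose_transpose, hQ₀.eq, hδQ.eq, Matrix.mul_add, Matrix.add_mul, Matrix.mul_assoc]
  abel
end

section
/- Let P̃₀ and δP̃ be a×b real matrices, K₀ and δK b×c real matrices, X a c×a real matrix, Γ an a×a symmetric real matrix, and W₂ a b×b symmetric positive definite real matrix. If the 3×3 block matrix [[Γ + He[P̃₀·K₀·X + P̃₀·δK·X + δP̃·K₀·X] , δP̃ , Xᵀ·δKᵀ] ; [δP̃ᵀ , −W₂⁻¹ , 0] ; [δK·X , 0 , −W₂]] is negative semidefinite, then He[(P̃₀ + δP̃)·(K₀ + δK)·X] + Γ is negative semidefinite. -/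
/-
Congruence with `L = [1, δP̃ W₂, δP̃]` turns the 3×3 block LMI into the conclusion: since
`W₂ W₂⁻¹ = 1`, every term involving `W₂` or `W₂⁻¹` cancels, and what remains is the block
`Γ + He[P̃₀K₀X + P̃₀δKX + δP̃K₀X]` plus `He[δP̃ δK X]`, i.e. `Γ + He[(P̃₀ + δP̃)(K₀ + δK)X]`.
-/

open Matrix

section Overbounding

variable {R : Type*} [CommRing R] {m n : Type*} [Fintype m] [Fintype n] [DecidableEq m]
  [DecidableEq n]

theorem fromCols_mul_fromBlocks_mul_transpose_of_mul_eq_one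
    (A : Matrix n n R) (U : Matrix n m R) (V : Matrix m n R) {W W' : Matrix m m R}
    (hW : W * W' = 1) :
    fromCols (1 : Matrix n n R) (fromCols (U * W) U) *
        fromBlocks A (fromCols U Vᵀ) (fromRows Uᵀ V) (fromBlocks (-W') 0 0 (-W)) *
        (fromCols (1 : Matrix n n R) (fromCols (U * W) U))ᵀ =
      A + U * V + (U * V)ᵀ := by
  simp only [transpose_fromCols, transpose_one, transpose_mul, fromCols_mul_fromBlocks,
    fromCols_mul_fromRows, Matrix.add_mul, Matrix.one_mul, Matrix.mul_one, Matrix.mul_zero,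
    add_zero, zero_add, Matrix.mul_neg, Matrix.neg_mul]
  rw [Matrix.mul_assoc U W W', hW, Matrix.mul_one]
  abel

theorem posSemidef_neg_add_mul_add_transpose_of_posSemidef_neg_fromBlocks
    [PartialOrder R] [StarRing R] [TrivialStar R]
    (A : Matrix n n R) (U : Matrix n m R) (V : Matrix m n R) {W : Matrix m m R}
    (hW : IsUnit W)
    (h : (-fromBlocks A (fromCols U Vᵀ) (fromRows Uᵀ V) (fromBlocks (-W⁻¹) 0 0 (-W))).PosSemidef) :
    (-(A + U * V + (U * V)ᵀ)).PosSemidef := by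
  have hWW : W * W⁻¹ = 1 := mul_nonsing_inv W ((isUnit_iff_isUnit_det W).mp hW)
  have hL := h.mul_mul_conjTranspose_same (fromCols (1 : Matrix n n R) (fromCols (U * W) U))
  rwa [conjTranspose_eq_transpose_of_trivial, Matrix.mul_neg, Matrix.neg_mul,
    fromCols_mul_fromBlocks_mul_transpose_of_mul_eq_one A U V hWW] at hL

end Overbounding

theorem ico_conic_constraint_general
    {a b c : ℕ}
    (Pt₀ δPt : Matrix (Fin a) (Fin b) ℝ)
    (K₀ δK : Matrix (Fin b) (Fin c) ℝ)
    (X : Matrix (Fin c) (Fin a) ℝ)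
    (Γ : Matrix (Fin a) (Fin a) ℝ)
    (W₂ : Matrix (Fin b) (Fin b) ℝ) (hW₂ : W₂.PosDef)
    (hLMI : (-(Matrix.fromBlocks
        (Γ + ((Pt₀ * K₀ * X + Pt₀ * δK * X + δPt * K₀ * X)
            + (Pt₀ * K₀ * X + Pt₀ * δK * X + δPt * K₀ * X)ᵀ))
        (Matrix.fromCols δPt (Xᵀ * δKᵀ))
        (Matrix.fromRows δPtᵀ (δK * X))
        (Matrix.fromBlocks (-(W₂⁻¹)) 0 0 (-W₂)))).PosSemidef) :
    (-((Pt₀ + δPt) * (K₀ + δK) * X + ((Pt₀ + δPt) * (K₀ + δK) * X)ᵀ + Γ)).PosSemidef := by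
  rw [← transpose_mul] at hLMI
  have h := posSemidef_neg_add_mul_add_transpose_of_posSemidef_neg_fromBlocks _ _ _
    hW₂.isUnit hLMI
  refine (congrArg (fun M : Matrix (Fin a) (Fin a) ℝ => (-M).PosSemidef) ?_).mp h
  simp only [Matrix.add_mul, Matrix.mul_add, transpose_add, Matrix.mul_assoc]
  abel

/-- ICO step: the LMI (12) implies the conic-sector LMI constraint (6)
He[P̃·K·X] + Γ ⪯ 0 at the updated variables. -/
theorem ico_conic_constraint
    {a b c : ℕ}
    (Pt₀ δPt : Matrix (Fin a) (Fin b) ℝ)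
    (K₀ δK : Matrix (Fin b) (Fin c) ℝ)
    (X : Matrix (Fin c) (Fin a) ℝ)
    (Γ : Matrix (Fin a) (Fin a) ℝ) (hΓ : Γ.IsSymm)
    (W₂ : Matrix (Fin b) (Fin b) ℝ) (hW₂ : W₂.PosDef)
    (hLMI : (-(Matrix.fromBlocks
        (Γ + ((Pt₀ * K₀ * X + Pt₀ * δK * X + δPt * K₀ * X)
            + (Pt₀ * K₀ * X + Pt₀ * δK * X + δPt * K₀ * X)ᵀ))
        (Matrix.fromCols δPt (Xᵀ * δKᵀ))
        (Matrix.fromRows δPtᵀ (δK * X))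
        (Matrix.fromBlocks (-(W₂⁻¹)) 0 0 (-W₂)))).PosSemidef) :
    (-((Pt₀ + δPt) * (K₀ + δK) * X + ((Pt₀ + δPt) * (K₀ + δK) * X)ᵀ + Γ)).PosSemidef :=
  ico_conic_constraint_general Pt₀ δPt K₀ δK X Γ W₂ hW₂ hLMI
end

section
/- Let Q₀ be an n×n symmetric positive definite real matrix and δQ an n×n symmetric real matrix such that Q := Q₀ + δQ is positive definite. Let M be an n×p real matrix and Z a p×p symmetric real matrix. If the block matrix [[Q₀⁻¹ − Q₀⁻¹·δQ·Q₀⁻¹ , M] ; [Mᵀ , Z]] is positive semidefinite, then Z − Mᵀ·Q·M is positive semidefinite, and in particular trace(Z) ≥ trace(Mᵀ·Q·M). -/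
/-!
Write `Q = Q₀ + δQ`. The second-order resolvent expansion
`Q⁻¹ = (Q₀⁻¹ - Q₀⁻¹ δQ Q₀⁻¹) + (δQ Q₀⁻¹)ᴴ Q⁻¹ (δQ Q₀⁻¹)` shows that the linearized inverse is
dominated by `Q⁻¹` in the Loewner order. Raising the top-left block of the LMI from the linearization
to `Q⁻¹` keeps it positive semidefinite, and the Schur complement of that block, `Z - Mᵀ Q M`, is
then positive semidefinite as well.
-/

open Matrix

namespace Matrix

variable {n m : Type*} [Fintype n] [DecidableEq n]

theorem PosSemidef.fromBlocks_add_left {R : Type*} [Ring R] [PartialOrder R] [StarRing R]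
    [AddLeftMono R] [Fintype m] {A P : Matrix n n R} {B : Matrix n m R} {C : Matrix m n R}
    {D : Matrix m m R} (h : (fromBlocks A B C D).PosSemidef) (hP : P.PosSemidef) :
    (fromBlocks (A + P) B C D).PosSemidef := by
  have hembed := hP.conjTranspose_mul_mul_same (fromCols (1 : Matrix n n R) (0 : Matrix n m R))
  rw [conjTranspose_fromCols_eq_fromRows_conjTranspose, fromRows_mul, fromRows_mul_fromCols]
    at hembed
  simpa [fromBlocks_add] using h.add hembed

section CommRing

variable {R : Type*} [CommRing R]

theorem inv_sub_inv_eq_inv_mul_sub_mul_inv {A B : Matrix n n R} (hA : IsUnit A) (hB : IsUnit B) :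
    A⁻¹ - B⁻¹ = A⁻¹ * (B - A) * B⁻¹ := by
  simpa only [nonsing_inv_eq_ringInverse] using Ring.inverse_sub_inverse (iff_of_true hA hB)

theorem inv_add_sub_first_order {A E : Matrix n n R} (hA : IsUnit A) (hAE : IsUnit (A + E)) :
    (A + E)⁻¹ - (A⁻¹ - A⁻¹ * E * A⁻¹) = A⁻¹ * E * (A + E)⁻¹ * E * A⁻¹ := by
  have hleft : A⁻¹ - (A + E)⁻¹ = A⁻¹ * E * (A + E)⁻¹ := by
    rw [inv_sub_inv_eq_inv_mul_sub_mul_inv hA hAE, add_sub_cancel_left]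
  have hright : A⁻¹ - (A + E)⁻¹ = (A + E)⁻¹ * E * A⁻¹ := by
    rw [← neg_sub, inv_sub_inv_eq_inv_mul_sub_mul_inv hAE hA, sub_add_cancel_left, mul_neg, neg_mul,
      neg_neg]
  calc (A + E)⁻¹ - (A⁻¹ - A⁻¹ * E * A⁻¹) = A⁻¹ * E * A⁻¹ - (A⁻¹ - (A + E)⁻¹) := by abel
    _ = A⁻¹ * E * (A⁻¹ - (A + E)⁻¹) := by rw [mul_sub, hleft, Matrix.mul_assoc]
    _ = A⁻¹ * E * (A + E)⁻¹ * E * A⁻¹ := by rw [hright]; simp only [Matrix.mul_assoc]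

end CommRing

section Field

variable {K : Type*} [Field K] [PartialOrder K] [StarRing K]

theorem posSemidef_inv_add_sub_first_order {A E : Matrix n n K} (hA : A.IsHermitian)
    (hAu : IsUnit A) (hE : E.IsHermitian) (hAE : (A + E).PosDef) :
    ((A + E)⁻¹ - (A⁻¹ - A⁻¹ * E * A⁻¹)).PosSemidef := by
  have hremainder :
      (A + E)⁻¹ - (A⁻¹ - A⁻¹ * E * A⁻¹) = (E * A⁻¹)ᴴ * (A + E)⁻¹ * (E * A⁻¹) := by
    rw [inv_add_sub_first_order hAu hAE.isUnit, conjTranspose_mul, hA.inv.eq, hE.eq]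
    simp only [Matrix.mul_assoc]
  rw [hremainder]
  exact hAE.posSemidef.inv.conjTranspose_mul_mul_same _

end Field

end Matrix

theorem convexified_objective_overbound_general
    {n p : ℕ}
    (Q₀ : Matrix (Fin n) (Fin n) ℝ) (hQ₀ : Q₀.PosDef)
    (δQ : Matrix (Fin n) (Fin n) ℝ) (hδQ : δQ.IsSymm)
    (hQ : (Q₀ + δQ).PosDef)
    (M : Matrix (Fin n) (Fin p) ℝ)
    (Z : Matrix (Fin p) (Fin p) ℝ)
    (hLMI : (Matrix.fromBlocks (Q₀⁻¹ - Q₀⁻¹ * δQ * Q₀⁻¹) M Mᵀ Z).PosSemidef) :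
    (Z - Mᵀ * (Q₀ + δQ) * M).PosSemidef ∧
      (Mᵀ * (Q₀ + δQ) * M).trace ≤ Z.trace := by
  have hraised : (fromBlocks (Q₀ + δQ)⁻¹ M Mᴴ Z).PosSemidef := by
    simpa [conjTranspose_eq_transpose_of_trivial] using hLMI.fromBlocks_add_left
      (posSemidef_inv_add_sub_first_order hQ₀.1 hQ₀.isUnit (isHermitian_iff_isSymm.2 hδQ) hQ)
  let := hQ.inv.isUnit.invertible
  have hschur := (hQ.inv.fromBlocks₁₁ M Z).1 hraised
  rw [conjTranspose_eq_transpose_of_trivial,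
    nonsing_inv_nonsing_inv _ ((isUnit_iff_isUnit_det _).1 hQ.isUnit)] at hschur
  exact ⟨hschur, by simpa [trace_sub] using hschur.trace_nonneg⟩

/-- The convexified constraint (10) overbounds the cubic term Mᵀ·Q·M of the H2 objective. -/
theorem convexified_objective_overbound
    {n p : ℕ}
    (Q₀ : Matrix (Fin n) (Fin n) ℝ) (hQ₀ : Q₀.PosDef)
    (δQ : Matrix (Fin n) (Fin n) ℝ) (hδQ : δQ.IsSymm)
    (hQ : (Q₀ + δQ).PosDef)
    (M : Matrix (Fin n) (Fin p) ℝ)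
    (Z : Matrix (Fin p) (Fin p) ℝ) (hZ : Z.IsSymm)
    (hLMI : (Matrix.fromBlocks (Q₀⁻¹ - Q₀⁻¹ * δQ * Q₀⁻¹) M Mᵀ Z).PosSemidef) :
    (Z - Mᵀ * (Q₀ + δQ) * M).PosSemidef ∧
      (Mᵀ * (Q₀ + δQ) * M).trace ≤ Z.trace :=
  convexified_objective_overbound_general Q₀ hQ₀ δQ hδQ hQ M Z hLMI
end

section
/- Let B₁ be an n×p real matrix, D₂₁ an m×p real matrix, B₂ an n×m real matrix, Â an n_c×n_c real matrix, B̂ an n_c×m real matrix, Ĉ an m×n_c real matrix, and define B̃ := [B₁ ; 0], E := [[−B₂ , 0] ; [0 , I_{n_c}]], S := [D₂₁ ; 0], K := [[0 , Ĉ] ; [B̂ , Â]] as block matrices. Assume D₂₁·B₁ᵀ = 0. Let Q₀ be an (n+n_c)×(n+n_c) symmetric positive definite real matrix, δQ an (n+n_c)×(n+n_c) symmetric real matrix with Q := Q₀ + δQ positive definite, and Z a p×p symmetric real matrix. If the block matrix [[Q₀⁻¹ − Q₀⁻¹·δQ·Q₀⁻¹ , E·K·S] ; [Sᵀ·Kᵀ·Eᵀ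 , Z]] is positive semidefinite, then trace((B̃ + E·K·S)ᵀ·Q·(B̃ + E·K·S)) ≤ trace(B̃ᵀ·Q·B̃) + trace(Z). -/
open Matrix

/-!
Write `G = E K S`, `Q = Q₀ + δQ` and `X = Q₀⁻¹ - Q₀⁻¹ δQ Q₀⁻¹`. Conjugating the LMI by the column
`[-Q G; I]` gives `Z - 2 GᵀQG + GᵀQXQG ⪰ 0`, and expanding `X` gives
`Q - QXQ = δQ Q₀⁻¹ Q Q₀⁻¹ δQ ⪰ 0`; adding the two, `Gᵀ Q G ⪯ Z`. The assumption `D₂₁ B₁ᵀ = 0`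
makes `B̃ Gᵀ = 0`, so the cross terms of the closed-loop cost have zero trace and the cost splits
as `trace (B̃ᵀ Q B̃) + trace (Gᵀ Q G)`.
-/

namespace Matrix

section CommRing

variable {R ι κ : Type*} [CommRing R] [Fintype ι] [Fintype κ]

/-- The first-order (Neumann) approximation of `(Q₀ + δQ)⁻¹`. -/
noncomputable def firstOrderInv [DecidableEq ι] (Q₀ δQ : Matrix ι ι R) : Matrix ι ι R :=
  Q₀⁻¹ - Q₀⁻¹ * δQ * Q₀⁻¹

lemma add_sub_mul_firstOrderInv_mul [DecidableEq ι] {Q₀ : Matrix ι ι R} (hQ₀ : IsUnit Q₀.det)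
    (δQ : Matrix ι ι R) :
    (Q₀ + δQ) - (Q₀ + δQ) * firstOrderInv Q₀ δQ * (Q₀ + δQ) =
      (δQ * Q₀⁻¹) * (Q₀ + δQ) * (Q₀⁻¹ * δQ) := by
  have cancel_left (B : Matrix ι ι R) : Q₀ * (Q₀⁻¹ * B) = B := mul_nonsing_inv_cancel_left _ _ hQ₀
  simp only [firstOrderInv, Matrix.mul_add, Matrix.add_mul, Matrix.mul_sub, Matrix.sub_mul,
    Matrix.mul_assoc, cancel_left, mul_nonsing_inv _ hQ₀, nonsing_inv_mul _ hQ₀, Matrix.mul_one,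
    Matrix.one_mul]
  abel

lemma trace_transpose_add_mul_mul_add_of_mul_transpose_eq_zero {B G : Matrix ι κ R}
    (hBG : B * Gᵀ = 0) (Q : Matrix ι ι R) :
    ((B + G)ᵀ * Q * (B + G)).trace = (Bᵀ * Q * B).trace + (Gᵀ * Q * G).trace := by
  have hGB : G * Bᵀ = 0 := by simpa using congrArg transpose hBG
  have cross₁ : (Bᵀ * Q * G).trace = 0 := by
    rw [trace_mul_comm, ← Matrix.mul_assoc, hGB, Matrix.zero_mul, trace_zero]
  have cross₂ : (Gᵀ * Q * B).trace = 0 := by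
    rw [trace_mul_comm, ← Matrix.mul_assoc, hBG, Matrix.zero_mul, trace_zero]
  simp only [transpose_add, Matrix.add_mul, Matrix.mul_add, trace_add, cross₁, cross₂]
  ring

lemma fromRows_zero_mul_transpose_fromRows_zero {m₁ m₂ k₁ k₂ : Type*}
    (A : Matrix m₁ κ R) (B : Matrix k₁ κ R) :
    (fromRows A 0 : Matrix (m₁ ⊕ m₂) κ R) * (fromRows B 0 : Matrix (k₁ ⊕ k₂) κ R)ᵀ =
      fromBlocks (A * Bᵀ) 0 0 0 := by
  rw [transpose_fromRows, fromRows_mul_fromCols]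
  simp

end CommRing

variable {ι κ : Type*} [Fintype ι] [Fintype κ]

lemma PosSemidef.transpose_mul_mul_same {A : Matrix ι ι ℝ} (hA : A.PosSemidef)
    (B : Matrix ι κ ℝ) : (Bᵀ * A * B).PosSemidef := by
  simpa only [conjTranspose_eq_transpose_of_trivial] using hA.conjTranspose_mul_mul_same B

lemma posSemidef_add_sub_mul_firstOrderInv_mul [DecidableEq ι] {Q₀ δQ : Matrix ι ι ℝ}
    (hQ₀ : IsUnit Q₀.det) (hQ₀symm : Q₀.IsSymm) (hδQ : δQ.IsSymm) (hQ : (Q₀ + δQ).PosSemidef) :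
    ((Q₀ + δQ) - (Q₀ + δQ) * firstOrderInv Q₀ δQ * (Q₀ + δQ)).PosSemidef := by
  have hsymm : (Q₀⁻¹ * δQ)ᵀ = δQ * Q₀⁻¹ := by
    rw [transpose_mul, transpose_nonsing_inv, hQ₀symm.eq, hδQ.eq]
  simpa only [add_sub_mul_firstOrderInv_mul hQ₀, hsymm] using
    hQ.transpose_mul_mul_same (Q₀⁻¹ * δQ)

lemma PosSemidef.sub_transpose_mul_mul_of_fromBlocks [DecidableEq κ] {X Q : Matrix ι ι ℝ}
    {G : Matrix ι κ ℝ} {Z : Matrix κ κ ℝ} (hM : (fromBlocks X G Gᵀ Z).PosSemidef)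
    (hQ : Q.IsSymm) (hX : (Q - Q * X * Q).PosSemidef) : (Z - Gᵀ * Q * G).PosSemidef := by
  let N : Matrix (ι ⊕ κ) κ ℝ := fromRows (-(Q * G)) 1
  have hconj : Nᵀ * fromBlocks X G Gᵀ Z * N =
      Gᵀ * Q * (X * (Q * G)) - Gᵀ * (Q * G) - Gᵀ * Q * G + Z := by
    rw [Matrix.mul_assoc, fromBlocks_mul_fromRows, transpose_fromRows, fromCols_mul_fromRows,
      transpose_neg, transpose_mul, hQ.eq]
    simp only [Matrix.mul_one, Matrix.one_mul, transpose_one, Matrix.mul_neg, Matrix.neg_mul,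
      Matrix.mul_add, Matrix.mul_assoc]
    abel
  have hsum : Z - Gᵀ * Q * G = Nᵀ * fromBlocks X G Gᵀ Z * N + Gᵀ * (Q - Q * X * Q) * G := by
    rw [hconj]
    simp only [Matrix.mul_sub, Matrix.sub_mul, Matrix.mul_assoc]
    abel
  rw [hsum]
  exact (hM.transpose_mul_mul_same N).add (hX.transpose_mul_mul_same G)

end Matrix

/-- Inequality (14) of Theorem 2: the convexified objective overbounds the true
closed-loop H2 cost under the standard H2 assumption D₂₁·B₁ᵀ = 0. -/
theorem convexified_cost_overbounds_h2_cost
    {n m p nc : ℕ}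
    (B₁ : Matrix (Fin n) (Fin p) ℝ) (D₂₁ : Matrix (Fin m) (Fin p) ℝ)
    (B₂ : Matrix (Fin n) (Fin m) ℝ)
    (Ahat : Matrix (Fin nc) (Fin nc) ℝ) (Bhat : Matrix (Fin nc) (Fin m) ℝ)
    (Chat : Matrix (Fin m) (Fin nc) ℝ)
    (h : D₂₁ * B₁ᵀ = 0)
    (Q₀ : Matrix (Fin n ⊕ Fin nc) (Fin n ⊕ Fin nc) ℝ) (hQ₀ : Q₀.PosDef)
    (δQ : Matrix (Fin n ⊕ Fin nc) (Fin n ⊕ Fin nc) ℝ) (hδQ : δQ.IsSymm)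
    (hQ : (Q₀ + δQ).PosDef)
    (Z : Matrix (Fin p) (Fin p) ℝ) (hZ : Z.IsSymm)
    (hLMI : (let E : Matrix (Fin n ⊕ Fin nc) (Fin m ⊕ Fin nc) ℝ :=
               Matrix.fromBlocks (-B₂) 0 0 (1 : Matrix (Fin nc) (Fin nc) ℝ)
             let S : Matrix (Fin m ⊕ Fin nc) (Fin p) ℝ := Matrix.fromRows D₂₁ 0
             let K : Matrix (Fin m ⊕ Fin nc) (Fin m ⊕ Fin nc) ℝ :=
               Matrix.fromBlocks 0 Chat Bhat Ahat
             (Matrix.fromBlocks (Q₀⁻¹ - Q₀⁻¹ * δQ * Q₀⁻¹) (E * K * S)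
               (Sᵀ * Kᵀ * Eᵀ) Z).PosSemidef)) :
    (let Bt : Matrix (Fin n ⊕ Fin nc) (Fin p) ℝ := Matrix.fromRows B₁ 0
     let E : Matrix (Fin n ⊕ Fin nc) (Fin m ⊕ Fin nc) ℝ :=
       Matrix.fromBlocks (-B₂) 0 0 (1 : Matrix (Fin nc) (Fin nc) ℝ)
     let S : Matrix (Fin m ⊕ Fin nc) (Fin p) ℝ := Matrix.fromRows D₂₁ 0
     let K : Matrix (Fin m ⊕ Fin nc) (Fin m ⊕ Fin nc) ℝ := Matrix.fromBlocks 0 Chat Bhat Ahat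
     ((Bt + E * K * S)ᵀ * (Q₀ + δQ) * (Bt + E * K * S)).trace ≤
       (Btᵀ * (Q₀ + δQ) * Bt).trace + Z.trace) := by
  intro Bt E S K
  replace hLMI : (fromBlocks (firstOrderInv Q₀ δQ) (E * K * S) (E * K * S)ᵀ Z).PosSemidef := by
    rwa [transpose_mul, transpose_mul, ← Matrix.mul_assoc]
  have hB₁D₂₁ : B₁ * D₂₁ᵀ = 0 := by simpa using congrArg transpose h
  have hBtG : Bt * (E * K * S)ᵀ = 0 := by
    rw [transpose_mul, ← Matrix.mul_assoc, fromRows_zero_mul_transpose_fromRows_zero, hB₁D₂₁]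
    simp
  have hQ₀symm : Q₀.IsSymm := by
    simpa only [IsSymm, conjTranspose_eq_transpose_of_trivial] using hQ₀.isHermitian.eq
  have hQsymm : (Q₀ + δQ).IsSymm := hQ₀symm.add hδQ
  have hcost := hLMI.sub_transpose_mul_mul_of_fromBlocks hQsymm <|
    posSemidef_add_sub_mul_firstOrderInv_mul hQ₀.det_pos.ne'.isUnit hQ₀symm hδQ hQ.posSemidef
  have htrace := hcost.trace_nonneg
  rw [trace_sub] at htrace
  rw [trace_transpose_add_mul_mul_add_of_mul_transpose_eq_zero hBtG]
  linarith
end
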